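/- Let A be an (α,β)-Frobenius extension of B with trace map tr, and let ψ : C_A(B) → C_A(α(B)) be the map characterized by tr(cx) = tr(x ψ(c)) for all x ∈ A, c ∈ C_A(B). Then ψ is a ring isomorphism from C_A(B) onto C_A(α(B)): it is bijective, ψ(1) = 1, and ψ(c₁c₂) = ψ(c₁)ψ(c₂). -/

import Mathlib

/-!
Write `c ~ d` (`IsNakayamaPair tr c d`) when `tr (c * x) = tr (x * d)` for all `x`. This relation is
multiplicative and additive by associativity alone, and the two nondegeneracies of `tr` make it
the graph of an injective function. Any `c` related to something already commutes with `B`, and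
any `d` related to something commutes with `α(B)`, because `tr` turns `β b * _` and `_ * α b`
into left and right multiplication by `b`. Surjectivity onto `C_A(α(B))` is where finiteness and
projectivity enter: they give dual bases `xᵢ, yᵢ` with `z = ∑ β(tr (z yᵢ)) xᵢ`, which yields left
nondegeneracy and the mirror expansion `z = ∑ yᵢ α(tr (xᵢ z))`, and from these
`c = ∑ β(tr (yᵢ d)) xᵢ` is the preimage of `d`.
-/

def IsNakayamaPair {A M : Type*} [Mul A] (tr : A → M) (c d : A) : Prop :=
  ∀ x, tr (c * x) = tr (x * d)

namespace IsNakayamaPair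

variable {A M : Type*} [Ring A] [AddCommGroup M] {tr : A →+ M} {c c₁ c₂ d d₁ d₂ : A}

theorem one : IsNakayamaPair tr 1 1 := fun x => by rw [one_mul, mul_one]

theorem mul (h₁ : IsNakayamaPair tr c₁ d₁) (h₂ : IsNakayamaPair tr c₂ d₂) :
    IsNakayamaPair tr (c₁ * c₂) (d₁ * d₂) := fun x => by
  rw [mul_assoc, h₁, mul_assoc, h₂, mul_assoc]

theorem add (h₁ : IsNakayamaPair tr c₁ d₁) (h₂ : IsNakayamaPair tr c₂ d₂) :
    IsNakayamaPair tr (c₁ + c₂) (d₁ + d₂) := fun x => by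
  rw [add_mul, mul_add, map_add, map_add, h₁, h₂]

theorem right_unique (hnd : ∀ a : A, (∀ x, tr (x * a) = 0) → a = 0)
    (h₁ : IsNakayamaPair tr c d₁) (h₂ : IsNakayamaPair tr c d₂) : d₁ = d₂ :=
  sub_eq_zero.mp <| hnd _ fun x => by rw [mul_sub, map_sub, ← h₁, ← h₂, sub_self]

theorem left_unique (hnd : ∀ a : A, (∀ x, tr (a * x) = 0) → a = 0)
    (h₁ : IsNakayamaPair tr c₁ d) (h₂ : IsNakayamaPair tr c₂ d) : c₁ = c₂ :=
  sub_eq_zero.mp <| hnd _ fun x => by rw [sub_mul, map_sub, h₁, h₂, sub_self]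

end IsNakayamaPair

namespace FrobeniusExtension

variable {A : Type*} [Ring A] {B : Subring A} {α : A ≃+* A} {β : B ≃+* B} {tr : A →+ B}

section Bimodule

variable (htr : ∀ (b b' : B) (x : A), tr ((β b : A) * x * α (b' : A)) = b * tr x * b')
include htr

theorem tr_beta_mul (b : B) (x : A) : tr ((β b : A) * x) = b * tr x := by
  simpa using htr b 1 x

theorem tr_mul_alpha (b : B) (x : A) : tr (x * α (b : A)) = tr x * b := by
  simpa using htr 1 b x

theorem _root_.IsNakayamaPair.commute_of_left_nondegenerate
    (hnd : ∀ a : A, (∀ x, tr (a * x) = 0) → a = 0) {c d : A} (h : IsNakayamaPair tr c d) (b : B) :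
    Commute c (b : A) := by
  refine sub_eq_zero.mp <| hnd _ fun x => ?_
  obtain ⟨b, rfl⟩ := β.surjective b
  rw [sub_mul, map_sub, sub_eq_zero]
  calc tr (c * β b * x) = tr (β b * (x * d)) := by rw [mul_assoc, h, mul_assoc]
    _ = b * tr (c * x) := by rw [tr_beta_mul htr, h]
    _ = tr (β b * c * x) := by rw [mul_assoc, tr_beta_mul htr]

theorem _root_.IsNakayamaPair.commute_alpha (hnd : ∀ a : A, (∀ x, tr (x * a) = 0) → a = 0)
    {c d : A} (h : IsNakayamaPair tr c d) (b : B) : Commute d (α (b : A)) := by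
  refine sub_eq_zero.mp <| hnd _ fun x => ?_
  rw [mul_sub, map_sub, sub_eq_zero]
  calc tr (x * (d * α b)) = tr (c * x) * b := by rw [← mul_assoc, tr_mul_alpha htr, h]
    _ = tr (x * (α b * d)) := by rw [← tr_mul_alpha htr, mul_assoc, h, mul_assoc]

end Bimodule

theorem exists_dual_basis (hfin : Module.Finite B A) (hproj : Module.Projective B A)
    (hsurj : ∀ f : A →+ B, (∀ (b : B) (x : A), f ((β b : A) * x) = b * f x) →
      ∃ a : A, ∀ x : A, f x = tr (x * a)) :
    ∃ (n : ℕ) (x y : Fin n → A), ∀ z, z = ∑ i, (β (tr (z * y i)) : A) * x i := by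
  obtain ⟨n, f, g, -, -, hfg⟩ := Module.Finite.exists_comp_eq_id_of_projective B A
  have hcoord (i : Fin n) : ∃ y : A, ∀ z, β.symm (g z i) = tr (z * y) := by
    refine hsurj ⟨⟨fun z => β.symm (g z i), by simp⟩, fun _ _ => by simp⟩ fun b z => ?_
    change β.symm (g (β b • z) i) = _
    simp [map_smul]
  choose y hy using hcoord
  refine ⟨n, fun i => f (Pi.single i 1), y, fun z => ?_⟩
  have hg (i : Fin n) : g z i = β (tr (z * y i)) := by rw [← hy, RingEquiv.apply_symm_apply]
  calc z = f (g z) := (DFunLike.congr_fun hfg z).symm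
    _ = f (∑ i, g z i • Pi.single i 1) := by
        congr 1
        ext i
        simp [Pi.single_apply]
    _ = _ := by simp only [map_sum, map_smul, hg]; rfl

section DualBasis

variable {n : ℕ} {x y : Fin n → A} (hdual : ∀ z, z = ∑ i, (β (tr (z * y i)) : A) * x i)
include hdual

theorem left_nondegenerate_of_dual_basis (a : A) (ha : ∀ w, tr (a * w) = 0) : a = 0 := by
  simpa [ha] using hdual a

variable (htr : ∀ (b b' : B) (x : A), tr ((β b : A) * x * α (b' : A)) = b * tr x * b')
  (hnd : ∀ a : A, (∀ x, tr (x * a) = 0) → a = 0)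
include htr

theorem tr_mul_eq_sum_of_dual_basis (w z : A) :
    tr (w * z) = ∑ i, tr (w * y i) * tr (x i * z) := by
  conv_lhs => rw [hdual w]
  simp only [Finset.sum_mul, map_sum, mul_assoc, tr_beta_mul htr]

include hnd in
theorem eq_sum_mul_alpha_of_dual_basis (z : A) : z = ∑ i, y i * α (tr (x i * z) : A) := by
  refine (sub_eq_zero.mp <| hnd _ fun w => ?_).symm
  rw [mul_sub, map_sub, sub_eq_zero, Finset.mul_sum, map_sum,
    tr_mul_eq_sum_of_dual_basis hdual htr]
  simp only [← mul_assoc, tr_mul_alpha htr]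

include hnd in
theorem exists_isNakayamaPair_of_commute_alpha {d : A} (hd : ∀ b : B, Commute d (α (b : A))) :
    ∃ c, IsNakayamaPair tr c d := by
  refine ⟨∑ i, (β (tr (y i * d)) : A) * x i, fun w => ?_⟩
  conv_rhs => rw [eq_sum_mul_alpha_of_dual_basis hdual htr hnd w]
  simp only [Finset.sum_mul, map_sum, mul_assoc, tr_beta_mul htr]
  refine Finset.sum_congr rfl fun i _ => ?_
  rw [← (hd _).eq, ← mul_assoc, tr_mul_alpha htr]

end DualBasis

end FrobeniusExtension

theorem nakayama_ring_isomorphism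
    {A : Type u} [Ring A] (B : Subring A) (α : A ≃+* A) (β : B ≃+* B)
    (hfin : Module.Finite B A) (hproj : Module.Projective B A)
    (tr : A →+ B)
    (htrbimod : ∀ (b b' : B) (x : A), tr ((β b : A) * x * α (b' : A)) = b * tr x * b')
    (htrnd : ∀ a : A, (∀ x : A, tr (x * a) = 0) → a = 0)
    (htrsurj : ∀ f : A →+ B, (∀ (b : B) (x : A), f ((β b : A) * x) = b * f x) →
      ∃ a : A, ∀ x : A, f x = tr (x * a))
    (ψ : A → A)
    (hψ : ∀ c : A, (∀ b : B, c * (b : A) = (b : A) * c) →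
      ∀ x : A, tr (c * x) = tr (x * ψ c)) :
    -- ψ(1) = 1:
    ψ 1 = 1 ∧
    -- ψ is multiplicative on C_A(B):
    (∀ c₁ c₂ : A, (∀ b : B, c₁ * (b : A) = (b : A) * c₁) →
      (∀ b : B, c₂ * (b : A) = (b : A) * c₂) → ψ (c₁ * c₂) = ψ c₁ * ψ c₂) ∧
    -- ψ is additive on C_A(B):
    (∀ c₁ c₂ : A, (∀ b : B, c₁ * (b : A) = (b : A) * c₁) →
      (∀ b : B, c₂ * (b : A) = (b : A) * c₂) → ψ (c₁ + c₂) = ψ c₁ + ψ c₂) ∧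
    -- ψ maps C_A(B) into C_A(α(B)):
    (∀ c : A, (∀ b : B, c * (b : A) = (b : A) * c) →
      ∀ b : B, ψ c * α (b : A) = α (b : A) * ψ c) ∧
    -- ψ is injective on C_A(B):
    (∀ c₁ c₂ : A, (∀ b : B, c₁ * (b : A) = (b : A) * c₁) →
      (∀ b : B, c₂ * (b : A) = (b : A) * c₂) → ψ c₁ = ψ c₂ → c₁ = c₂) ∧
    -- ψ is surjective from C_A(B) onto C_A(α(B)):
    (∀ a : A, (∀ b : B, a * α (b : A) = α (b : A) * a) →
      ∃ c : A, (∀ b : B, c * (b : A) = (b : A) * c) ∧ ψ c = a) := by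
  obtain ⟨n, x, y, hdual⟩ := FrobeniusExtension.exists_dual_basis hfin hproj htrsurj
  have hlnd := FrobeniusExtension.left_nondegenerate_of_dual_basis hdual
  have hpair (c : A) (hc : ∀ b : B, Commute c b) : IsNakayamaPair tr c (ψ c) := hψ c hc
  refine ⟨(hpair 1 fun b => Commute.one_left (b : A)).right_unique htrnd IsNakayamaPair.one,
    fun c₁ c₂ hc₁ hc₂ => ?_, fun c₁ c₂ hc₁ hc₂ => ?_, fun c hc => ?_,
    fun c₁ c₂ hc₁ hc₂ he => ?_, fun a ha => ?_⟩
  · exact (hpair _ fun b => Commute.mul_left (hc₁ b) (hc₂ b)).right_unique htrnd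
      ((hpair c₁ hc₁).mul (hpair c₂ hc₂))
  · exact (hpair _ fun b => Commute.add_left (hc₁ b) (hc₂ b)).right_unique htrnd
      ((hpair c₁ hc₁).add (hpair c₂ hc₂))
  · exact (hpair c hc).commute_alpha htrbimod htrnd
  · exact (hpair c₁ hc₁).left_unique hlnd (he ▸ hpair c₂ hc₂)
  · obtain ⟨c, hca⟩ :=
      FrobeniusExtension.exists_isNakayamaPair_of_commute_alpha hdual htrbimod htrnd ha
    have hc := hca.commute_of_left_nondegenerate htrbimod hlnd
    exact ⟨c, hc, (hpair c hc).right_unique htrnd hca⟩
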